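/- arXiv:0708.1979 — 3 statements merged into one kernel-verified Lean document; each statement's English description precedes it below -/
import Mathlib

section
/- For every regular uncountable cardinal λ, I[λ] is a normal ideal on λ: it is closed under subsets, it contains every non-stationary subset of λ (hence is closed under finite unions), and it is closed under diagonal unions, i.e. if A_i ∈ I[λ] for all i < λ then {δ < λ : (∃ i < δ)(δ ∈ A_i)} ∈ I[λ]. -/
open Cardinal Set Ordinal

noncomputable section

/-- The order type of a set of ordinals (meaningful for bounded sets):
the unique ordinal `α` such that `s` is order-isomorphic to `Set.Iio α`. -/
def otp (s : Set Ordinal.{0}) : Ordinal.{0} :=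
  sInf {α : Ordinal | Nonempty (↥s ≃o ↥(Set.Iio α))}

/-- `acc C`: the accumulation points of a set of ordinals,
`{β : 0 < β = sup (C ∩ β)}`. -/
def ordAcc (C : Set Ordinal.{0}) : Set Ordinal.{0} :=
  {β | 0 < β ∧ β = sSup (C ∩ Set.Iio β)}

/-- `nacc C`: the non-accumulation points of `C`, `{β ∈ C : β > sup (C ∩ β)}`. -/
def ordNacc (C : Set Ordinal.{0}) : Set Ordinal.{0} :=
  {β | β ∈ C ∧ sSup (C ∩ Set.Iio β) < β}

/-- `C` is a closed subset of the ordinal `α`: every accumulation point of `C`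
below `α` belongs to `C`. -/
def closedBelow (C : Set Ordinal.{0}) (α : Ordinal.{0}) : Prop :=
  ∀ β < α, β ∈ ordAcc C → β ∈ C

/-- `C` is a club (closed unbounded subset) of the (limit) ordinal `α`. -/
def isClub (C : Set Ordinal.{0}) (α : Ordinal.{0}) : Prop :=
  C ⊆ Set.Iio α ∧ (∀ β < α, ∃ γ ∈ C, β ≤ γ) ∧ closedBelow C α

/-- `S` is a stationary subset of the ordinal `α`: it meets every club of `α`. -/
def isStationary (S : Set Ordinal.{0}) (α : Ordinal.{0}) : Prop :=
  ∀ C, isClub C α → (S ∩ C).Nonempty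

/-- `A ∈ I[λ]`: `A` is a set of ordinals `< λ`, the set of `δ ∈ A` with `δ = cf δ`
is non-stationary, and there is a sequence `⟨P_α : α < λ⟩` of families of fewer
than `λ` subsets of `α` such that every limit `α ∈ A` with `cf α < α` has an
unbounded subset `x ⊆ α` of order type `< α` all of whose proper initial
segments appear in `⋃_{γ < α} P_γ`. -/
def approachable (lam : Cardinal.{0}) (A : Set Ordinal.{0}) : Prop :=
  A ⊆ Set.Iio lam.ord ∧
  ¬ isStationary {δ | δ ∈ A ∧ δ.cof.ord = δ} lam.ord ∧
  ∃ P : Ordinal.{0} → Set (Set Ordinal.{0}),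
    (∀ α < lam.ord, (∀ x ∈ P α, x ⊆ Set.Iio α) ∧ #(P α) < Cardinal.lift.{1} lam) ∧
    ∀ α ∈ A, Order.IsSuccLimit α → α.cof.ord < α →
      ∃ x : Set Ordinal, x ⊆ Set.Iio α ∧ sSup x = α ∧ otp x < α ∧
        ∀ ζ < α, x ∩ Set.Iio ζ ∈ ⋃ γ ∈ Set.Iio α, P γ


theorem sSup_reach {s : Set Ordinal.{0}} {β : Ordinal.{0}} (hub : ∀ y ∈ s, y < β)
    (hunb : ∀ ε < β, ∃ d ∈ s, ε < d) : sSup s = β := by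
  rcases eq_or_ne β 0 with rfl | h0
  · have hs : s = ∅ := eq_empty_iff_forall_notMem.2 fun y hy => (not_lt.2 (zero_le (a := y)) (hub y hy))
    simp [hs, csSup_empty]
  · apply le_antisymm
    · exact csSup_le' fun y hy => (hub y hy).le
    · by_contra h
      push_neg at h
      obtain ⟨d, hd, hdgt⟩ := hunb _ h
      exact absurd (le_csSup ⟨β, fun y hy => (hub y hy).le⟩ hd) (not_le.2 hdgt)

theorem exists_between_of_sSup {s : Set Ordinal.{0}} {β ε : Ordinal} (h : sSup s = β)
    (hε : ε < β) : ∃ d ∈ s, ε < d := by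
  rw [← h] at hε
  rcases s.eq_empty_or_nonempty with rfl | hne
  · rw [csSup_empty] at hε
    exact absurd hε (not_lt.2 (zero_le (a := ε)))
  · exact exists_lt_of_lt_csSup hne hε

theorem type_Iio' (d : Ordinal.{0}) :
    type ((· < ·) : ↥(Set.Iio d) → ↥(Set.Iio d) → Prop) = Ordinal.lift.{1} d := by
  haveI i1 : IsWellOrder d.ToType ((· < ·) : d.ToType → d.ToType → Prop) := isWellOrder_lt
  haveI i2 : IsWellOrder (↥(Set.Iio d)) ((· < ·) : ↥(Set.Iio d) → ↥(Set.Iio d) → Prop) :=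
    isWellOrder_lt
  have iso := (Ordinal.ToType.mk (o := d)).toRelIsoLT
  have h2 : Ordinal.lift.{0} (type ((· < ·) : ↥(Set.Iio d) → ↥(Set.Iio d) → Prop))
      = Ordinal.lift.{1} (type ((· < ·) : d.ToType → d.ToType → Prop)) :=
    iso.ordinal_lift_type_eq
  rw [Ordinal.type_toType] at h2
  simpa using h2

theorem otp_le_of_strictMono {s : Set Ordinal.{0}} {c : Ordinal.{0}} (g : ↥s → Ordinal.{0})
    (mono : StrictMono g) (hlt : ∀ x, g x < c) : otp s ≤ c := by
  haveI i2 : ∀ t : Set Ordinal.{0},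
      IsWellOrder (↥t) ((· < ·) : ↥t → ↥t → Prop) := fun t => isWellOrder_lt
  have g' : ↥s ↪o ↥(Set.Iio c) :=
    OrderEmbedding.ofStrictMono (fun x => ⟨g x, hlt x⟩) (fun a b hab => by
      exact mono hab)
  have emb : ((· < ·) : ↥s → ↥s → Prop) ↪r ((· < ·) : ↥(Set.Iio c) → ↥(Set.Iio c) → Prop) :=
    g'.ltEmbedding
  have h1 : type ((· < ·) : ↥s → ↥s → Prop) ≤ Ordinal.lift.{1} c := by
    rw [← type_Iio' c]; exact emb.ordinal_type_le
  obtain ⟨β, hβ⟩ := Ordinal.mem_range_lift_of_le h1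
  have hβc : β ≤ c := by
    rw [← Ordinal.lift_le.{1} (a := β) (b := c), hβ]; exact h1
  have hiso : Nonempty (↥s ≃o ↥(Set.Iio β)) := by
    have heq : type ((· < ·) : ↥(Set.Iio β) → ↥(Set.Iio β) → Prop)
        = type ((· < ·) : ↥s → ↥s → Prop) := by
      rw [type_Iio' β, hβ]
    obtain ⟨f⟩ := (Ordinal.type_eq.1 heq)
    exact ⟨(OrderIso.ofRelIsoLT f).symm⟩
  exact le_trans (csInf_le' hiso) hβc
theorem exists_cofinal_small {α : Ordinal.{0}} (hlim : Order.IsSuccLimit α) (hcof : α.cof.ord < α)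
    {b : Ordinal} (hb : b < α) :
    ∃ x : Set Ordinal.{0}, x ⊆ Set.Iio α ∧ (∀ y ∈ x, b < y) ∧ sSup x = α ∧ otp x < α := by
  obtain ⟨f, hf⟩ := Ordinal.exists_fundamental_sequence α
  set x : Set Ordinal.{0} := {δ | b < δ ∧ ∃ i, ∃ hi : i < α.cof.ord, f i hi = δ} with hx
  have hsub : x ⊆ Set.Iio α := by
    rintro δ ⟨-, i, hi, rfl⟩
    exact Set.mem_Iio.2 (hf.lt hi)
  have hbd : ∀ y ∈ x, b < y := fun y hy => hy.1
  have hsup : sSup x = α := by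
    apply sSup_reach (fun y hy => hsub hy)
    intro ε hε
    have h1 : max ε b + 1 < α := hlim.succ_lt (max_lt hε hb)
    rw [← hf.blsub_eq] at h1
    obtain ⟨i, hi, hle⟩ := Ordinal.lt_blsub_iff.1 h1
    have h2 : max ε b < f i hi := by
      refine lt_of_lt_of_le ?_ hle
      rw [Ordinal.add_one_eq_succ]
      exact Order.lt_succ _
    exact ⟨f i hi, ⟨lt_of_le_of_lt (le_max_right _ _) h2, i, hi, rfl⟩,
      lt_of_le_of_lt (le_max_left _ _) h2⟩
  have hotp : otp x < α := by
    have key : ∀ y : ↥x, (sInf {i | ∃ hi : i < α.cof.ord, f i hi = (y : Ordinal)}) ∈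
        {i | ∃ hi : i < α.cof.ord, f i hi = (y : Ordinal)} := by
      intro y
      apply csInf_mem
      obtain ⟨-, i, hi, hfi⟩ := y.2
      exact ⟨i, hi, hfi⟩
    set e : ↥x → Ordinal := fun y => sInf {i | ∃ hi : i < α.cof.ord, f i hi = (y : Ordinal)} with he
    have hmono : StrictMono e := by
      intro y z hyz
      obtain ⟨hi, hfi⟩ := key y
      obtain ⟨hj, hfj⟩ := key z
      by_contra hle
      push_neg at hle
      have : (z : Ordinal) ≤ (y : Ordinal) := by
        rw [← hfi, ← hfj]
        exact hf.monotone hj hi hle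
      exact absurd (Subtype.coe_lt_coe.2 hyz) (not_lt.2 this)
    have hvals : ∀ y : ↥x, e y < α.cof.ord := fun y => (key y).1
    exact lt_of_le_of_lt (otp_le_of_strictMono e hmono hvals) hcof
  exact ⟨x, hsub, hbd, hsup, hotp⟩

theorem sSup_lt_ord' {lam : Cardinal.{0}} (hreg : lam.IsRegular) {S : Set Ordinal.{0}}
    (hS : ∀ s ∈ S, s < lam.ord) (hcard : #S < Cardinal.lift.{1} lam) : sSup S < lam.ord := by
  rcases S.eq_empty_or_nonempty with rfl | hne
  · rw [csSup_empty]
    have : (0:Ordinal) < lam.ord := by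
      rw [← Cardinal.ord_zero]
      exact Cardinal.ord_lt_ord.2 hreg.pos
    simpa using this
  · set e := Ordinal.ToType.mk (o := lam.ord) with he
    set ι := {t : lam.ord.ToType // ((e.symm t : ↥(Set.Iio lam.ord)) : Ordinal) ∈ S} with hι
    set f : ι → Ordinal.{0} := fun t => ((e.symm t.1 : ↥(Set.Iio lam.ord)) : Ordinal) with hfdef
    have heqv : ι ≃ ↥S := by
      refine ⟨fun t => ⟨f t, t.2⟩, fun s => ⟨e ⟨s.1, hS s.1 s.2⟩, by simpa [hfdef] using s.2⟩, ?_, ?_⟩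
      · intro t; ext; simp [hfdef]
      · intro s; ext; simp [hfdef]
    have hcard2 : #ι < lam.ord.cof := by
      rw [hreg.cof_eq]
      have : Cardinal.lift.{1} #ι = #↥S := by
        have := Cardinal.lift_mk_eq'.2 ⟨heqv⟩
        simpa using this
      have h2 : Cardinal.lift.{1} #ι < Cardinal.lift.{1} lam := by
        rw [this]; exact hcard
      exact Cardinal.lift_lt.1 h2
    have hsup : iSup f < lam.ord := Ordinal.iSup_lt_ord hcard2 fun i => hS _ i.2
    refine lt_of_le_of_lt (csSup_le hne fun s hs => ?_) hsup
    have : s = f ⟨e ⟨s, hS s hs⟩, by simpa [hfdef] using hs⟩ := by simp [hfdef]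
    rw [this]
    exact Ordinal.le_iSup f _
theorem isRegular_lift {lam : Cardinal.{0}} (hreg : lam.IsRegular) :
    (Cardinal.lift.{1} lam).IsRegular := by
  constructor
  · rw [← Cardinal.lift_aleph0.{1,0}]
    exact Cardinal.lift_le.2 hreg.1
  · rw [← Cardinal.lift_ord, ← Ordinal.lift_cof]
    exact Cardinal.lift_le.2 hreg.2
section Clubs
variable {lam : Cardinal.{0}}

theorem succ_lt_lam (hreg : lam.IsRegular) {a : Ordinal} (h : a < lam.ord) : a + 1 < lam.ord := by
  rw [Ordinal.add_one_eq_succ]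
  exact (Cardinal.isSuccLimit_ord hreg.1).succ_lt h

theorem nonstat_mono {S T : Set Ordinal.{0}} {α : Ordinal} (h : S ⊆ T)
    (hT : ¬ isStationary T α) : ¬ isStationary S α := by
  intro hS
  apply hT
  intro C hC
  obtain ⟨d, hd1, hd2⟩ := hS C hC
  exact ⟨d, h hd1, hd2⟩

theorem isClub_Iio {α : Ordinal.{0}} : isClub (Set.Iio α) α :=
  ⟨subset_rfl, fun β hβ => ⟨β, hβ, le_rfl⟩, fun β hβ _ => hβ⟩

theorem ordAcc_mono {s t : Set Ordinal.{0}} {β : Ordinal} (h : ∀ y ∈ s ∩ Set.Iio β, y ∈ t)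
    (hβ : β ∈ ordAcc s) : β ∈ ordAcc t := by
  refine ⟨hβ.1, (sSup_reach (fun y hy => hy.2) fun ε hε => ?_).symm⟩
  obtain ⟨d, hd, hdε⟩ := exists_between_of_sSup hβ.2.symm hε
  exact ⟨d, ⟨h d hd, hd.2⟩, hdε⟩

theorem isClub_inter_Ioi (hreg : lam.IsRegular) {C : Set Ordinal.{0}} {θ : Ordinal} (hC : isClub C lam.ord)
    (hθ : θ < lam.ord) : isClub (C ∩ Set.Ioi θ) lam.ord := by
  refine ⟨fun y hy => hC.1 hy.1, fun β hβ => ?_, fun β hβ hacc => ?_⟩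
  · obtain ⟨γ, hγ, hγ2⟩ := hC.2.1 (max β (θ + 1)) (max_lt hβ (succ_lt_lam hreg hθ))
    exact ⟨γ, ⟨hγ, lt_of_lt_of_le (lt_of_lt_of_le (lt_add_one θ) (le_max_right _ _)) hγ2⟩,
      le_trans (le_max_left _ _) hγ2⟩
  · have hmem : β ∈ C := hC.2.2 β hβ (ordAcc_mono (fun y hy => hy.1.1) hacc)
    obtain ⟨d, hd, -⟩ := exists_between_of_sSup hacc.2.symm hacc.1
    exact ⟨hmem, Set.mem_Ioi.2 (lt_trans hd.1.2 hd.2)⟩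

theorem diagClub (hreg : lam.IsRegular) (hunc : ℵ₀ < lam) (C : Ordinal.{0} → Set Ordinal.{0})
    (hC : ∀ i < lam.ord, isClub (C i) lam.ord) :
    isClub (Set.Iio lam.ord ∩ {δ | ∀ i < δ, δ ∈ C i}) lam.ord := by
  classical
  set D := Set.Iio lam.ord ∩ {δ | ∀ i < δ, δ ∈ C i} with hD
  have pick : ∀ i δ : Ordinal, ∃ c : Ordinal, i < lam.ord → δ + 1 < lam.ord →
      c ∈ C i ∧ δ + 1 ≤ c := by
    intro i δ
    by_cases h : i < lam.ord ∧ δ + 1 < lam.ord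
    · obtain ⟨c, hc1, hc2⟩ := (hC i h.1).2.1 (δ + 1) h.2
      exact ⟨c, fun _ _ => ⟨hc1, hc2⟩⟩
    · exact ⟨0, fun h1 h2 => absurd ⟨h1, h2⟩ h⟩
  choose p hp using pick
  set next : Ordinal → Ordinal := fun δ => sSup ((fun i => p i δ) '' Set.Iic δ) + 1 with hnextdef
  have hnext : ∀ δ < lam.ord, δ < next δ ∧ next δ < lam.ord ∧
      ∀ i ≤ δ, ∃ c ∈ C i, δ < c ∧ c < next δ := by
    intro δ hδ
    have hδ1 : δ + 1 < lam.ord := succ_lt_lam hreg hδ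
    have hmemT : ∀ y ∈ (fun i => p i δ) '' Set.Iic δ, y < lam.ord := by
      rintro y ⟨i, hi, rfl⟩
      exact Set.mem_Iio.1 ((hC i (lt_of_le_of_lt hi hδ)).1 (hp i δ (lt_of_le_of_lt hi hδ) hδ1).1)
    have hTcard : #((fun i => p i δ) '' Set.Iic δ) < Cardinal.lift.{1} lam := by
      refine lt_of_le_of_lt (Cardinal.mk_image_le) ?_
      have h1 : Set.Iic δ = Set.Iio (δ + 1) := by
        rw [Ordinal.add_one_eq_succ, Order.Iio_succ_of_not_isMax (not_isMax δ)]
      rw [h1, Ordinal.mk_Iio_ordinal]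
      exact Cardinal.lift_lt.2 (Cardinal.lt_ord.1 hδ1)
    have hsupT : sSup ((fun i => p i δ) '' Set.Iic δ) < lam.ord :=
      sSup_lt_ord' hreg hmemT hTcard
    have hbddT : BddAbove ((fun i => p i δ) '' Set.Iic δ) :=
      ⟨lam.ord, fun y hy => (hmemT y hy).le⟩
    have hp0 : δ + 1 ≤ p 0 δ :=
      (hp 0 δ (lt_of_le_of_lt (zero_le (a := δ)) hδ) hδ1).2
    have hδnext : δ < next δ := by
      have : p 0 δ ≤ sSup ((fun i => p i δ) '' Set.Iic δ) :=
        le_csSup hbddT ⟨0, zero_le (a := δ), rfl⟩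
      have h2 : δ < p 0 δ := lt_of_lt_of_le (lt_add_one δ) hp0
      calc δ < p 0 δ := h2
        _ ≤ sSup ((fun i => p i δ) '' Set.Iic δ) := this
        _ < next δ := lt_add_one _
    refine ⟨hδnext, succ_lt_lam hreg hsupT, ?_⟩
    intro i hi
    have hil : i < lam.ord := lt_of_le_of_lt hi hδ
    refine ⟨p i δ, (hp i δ hil hδ1).1, lt_of_lt_of_le (lt_add_one δ) (hp i δ hil hδ1).2, ?_⟩
    exact lt_of_le_of_lt (le_csSup hbddT ⟨i, hi, rfl⟩) (lt_add_one _)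
  -- now the three club properties
  refine ⟨fun y hy => hy.1, ?_, ?_⟩
  · -- unbounded
    intro β hβ
    set g : ℕ → Ordinal := fun n => next^[n] (β + 1) with hg
    have hgs : ∀ n, g (n + 1) = next (g n) := by
      intro n
      simp [hg, Function.iterate_succ_apply']
    have hglt : ∀ n, g n < lam.ord := by
      intro n
      induction n with
      | zero => simpa [hg] using succ_lt_lam hreg hβ
      | succ n ih => rw [hgs n]; exact (hnext (g n) ih).2.1
    have hgmono : StrictMono g := by
      apply strictMono_nat_of_lt_succ
      intro n
      rw [hgs n]
      exact (hnext (g n) (hglt n)).1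
    have hrange : ∀ y ∈ Set.range g, y < lam.ord := by rintro y ⟨n, rfl⟩; exact hglt n
    have hgl : sSup (Set.range g) < lam.ord := by
      have h1 : Cardinal.lift.{0} #(Set.range g) ≤ Cardinal.lift.{1} #ℕ :=
        Cardinal.mk_range_le_lift
      rw [Cardinal.mk_nat, Cardinal.lift_aleph0, Cardinal.lift_uzero] at h1
      refine sSup_lt_ord' hreg hrange (lt_of_le_of_lt h1 ?_)
      rw [← Cardinal.lift_aleph0.{1,0}]
      exact Cardinal.lift_lt.2 hunc
    set γ := sSup (Set.range g) with hγ
    have hbdd : BddAbove (Set.range g) := ⟨lam.ord, fun y hy => (hrange y hy).le⟩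
    have hβγ : β < γ := by
      have : g 0 ≤ γ := le_csSup hbdd ⟨0, rfl⟩
      simp only [hg, Function.iterate_zero_apply] at this
      exact lt_of_lt_of_le (lt_add_one β) this
    refine ⟨γ, ⟨hgl, fun i hiγ => ?_⟩, hβγ.le⟩
    have hil : i < lam.ord := hiγ.trans hgl
    obtain ⟨y, ⟨n, rfl⟩, hin⟩ := exists_lt_of_lt_csSup (Set.range_nonempty g) hiγ
    apply (hC i hil).2.2 γ hgl
    refine ⟨lt_of_le_of_lt (zero_le (a := β)) hβγ, (sSup_reach (fun y hy => hy.2) ?_).symm⟩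
    intro ε hε
    obtain ⟨y, ⟨m, rfl⟩, hεm⟩ := exists_lt_of_lt_csSup (Set.range_nonempty g) hε
    have hik : i ≤ g (max n m) := (hin.trans_le (hgmono.monotone (le_max_left n m))).le
    obtain ⟨c, hc, hgc, hcnext⟩ := (hnext (g (max n m)) (hglt _)).2.2 i hik
    refine ⟨c, ⟨hc, ?_⟩, lt_of_lt_of_le hεm (lt_of_le_of_lt (hgmono.monotone (le_max_right n m)) hgc).le⟩
    have : next (g (max n m)) ≤ γ := by
      rw [← hgs (max n m)]
      exact le_csSup hbdd ⟨max n m + 1, rfl⟩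
    exact lt_of_lt_of_le hcnext this
  · -- closed
    intro β hbl hacc
    refine ⟨hbl, fun i hiβ => ?_⟩
    apply (hC i (hiβ.trans hbl)).2.2 β hbl
    refine ⟨hacc.1, (sSup_reach (fun y hy => hy.2) ?_).symm⟩
    intro ε hε
    obtain ⟨d, hd, hdε⟩ := exists_between_of_sSup hacc.2.symm (max_lt hε hiβ)
    exact ⟨d, ⟨hd.1.2 i (lt_of_le_of_lt (le_max_right ε i) hdε), hd.2⟩,
      lt_of_le_of_lt (le_max_left ε i) hdε⟩

end Clubs

theorem exists_club_disjoint {S : Set Ordinal.{0}} {α : Ordinal} (h : ¬ isStationary S α) :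
    ∃ C, isClub C α ∧ S ∩ C = ∅ := by
  unfold isStationary at h
  push_neg at h
  obtain ⟨C, hC, hCe⟩ := h
  exact ⟨C, hC, hCe⟩

section Parts
variable {lam : Cardinal.{0}}

theorem part_sub (A B : Set Ordinal.{0}) (hA : approachable lam A) (hBA : B ⊆ A) :
    approachable lam B := by
  obtain ⟨h1, h2, P, hP, hw⟩ := hA
  exact ⟨hBA.trans h1, nonstat_mono (S := {δ | δ ∈ B ∧ δ.cof.ord = δ}) (T := {δ | δ ∈ A ∧ δ.cof.ord = δ})
      (fun δ hδ => ⟨hBA hδ.1, hδ.2⟩) h2, P, hP,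
    fun α hα => hw α (hBA hα)⟩

theorem part_union (hreg : lam.IsRegular) (hunc : ℵ₀ < lam) (A B : Set Ordinal.{0})
    (hA : approachable lam A) (hB : approachable lam B) : approachable lam (A ∪ B) := by
  classical
  obtain ⟨h1A, h2A, PA, hPA, hwA⟩ := hA
  obtain ⟨h1B, h2B, PB, hPB, hwB⟩ := hB
  obtain ⟨EA, hEA, hEAd⟩ := exists_club_disjoint h2A
  obtain ⟨EB, hEB, hEBd⟩ := exists_club_disjoint h2B
  refine ⟨Set.union_subset h1A h1B, ?_, fun γ => PA γ ∪ PB γ, ?_, ?_⟩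
  · -- nonstationary
    set Cf : Ordinal.{0} → Set Ordinal.{0} := fun i => if i = 0 then EA else EB with hCf
    have hCfc : ∀ i < lam.ord, isClub (Cf i) lam.ord := by
      intro i _
      by_cases h : i = 0 <;> simp [hCf, h, hEA, hEB]
    have h1l : (1 : Ordinal) < lam.ord := by
      rw [Cardinal.lt_ord]
      simpa using lt_of_lt_of_le Cardinal.one_lt_aleph0 hreg.1
    have hW := isClub_inter_Ioi hreg (diagClub hreg hunc Cf hCfc) h1l
    intro hst
    obtain ⟨δ, hδR, hδW⟩ := hst _ hW
    have hδ1 : (1 : Ordinal) < δ := hδW.2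
    have hδEA : δ ∈ EA := by
      have := hδW.1.2 0 (lt_trans zero_lt_one hδ1)
      simpa [hCf] using this
    have hδEB : δ ∈ EB := by
      have := hδW.1.2 1 hδ1
      simpa [hCf] using this
    rw [Set.eq_empty_iff_forall_notMem] at hEAd hEBd
    rcases hδR.1 with h | h
    · exact hEAd δ ⟨⟨h, hδR.2⟩, hδEA⟩
    · exact hEBd δ ⟨⟨h, hδR.2⟩, hδEB⟩
  · intro γ hγ
    constructor
    · intro x hx
      rcases hx with hx | hx
      · exact (hPA γ hγ).1 x hx
      · exact (hPB γ hγ).1 x hx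
    · refine lt_of_le_of_lt (Cardinal.mk_union_le _ _) ?_
      exact Cardinal.add_lt_of_lt (isRegular_lift hreg).1 (hPA γ hγ).2 (hPB γ hγ).2
  · intro α hα hlim hcof
    rcases hα with hα | hα
    · obtain ⟨x, hx1, hx2, hx3, hx4⟩ := hwA α hα hlim hcof
      refine ⟨x, hx1, hx2, hx3, fun ζ hζ => ?_⟩
      exact Set.iUnion₂_mono (fun γ _ => Set.subset_union_left) (hx4 ζ hζ)
    · obtain ⟨x, hx1, hx2, hx3, hx4⟩ := hwB α hα hlim hcof
      refine ⟨x, hx1, hx2, hx3, fun ζ hζ => ?_⟩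
      exact Set.iUnion₂_mono (fun γ _ => Set.subset_union_right) (hx4 ζ hζ)

theorem part_diag (hreg : lam.IsRegular) (hunc : ℵ₀ < lam) (A : Ordinal.{0} → Set Ordinal.{0})
    (hA : ∀ i, i < lam.ord → approachable lam (A i)) :
    approachable lam {δ | δ < lam.ord ∧ ∃ i < δ, δ ∈ A i} := by
  classical
  have hdata : ∀ i : Ordinal.{0}, ∃ (P : Ordinal.{0} → Set (Set Ordinal.{0}))
      (E : Set Ordinal.{0}), i < lam.ord →
      (isClub E lam.ord ∧ ({δ | δ ∈ A i ∧ δ.cof.ord = δ} ∩ E = ∅) ∧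
       (∀ β < lam.ord, (∀ x ∈ P β, x ⊆ Set.Iio β) ∧ #(P β) < Cardinal.lift.{1} lam) ∧
       (∀ α ∈ A i, Order.IsSuccLimit α → α.cof.ord < α → ∃ x : Set Ordinal, x ⊆ Set.Iio α ∧
         sSup x = α ∧ otp x < α ∧ ∀ ζ < α, x ∩ Set.Iio ζ ∈ ⋃ γ ∈ Set.Iio α, P γ)) := by
    intro i
    by_cases h : i < lam.ord
    · obtain ⟨h1, h2, P, hP, hw⟩ := hA i h
      obtain ⟨E, hE, hEd⟩ := exists_club_disjoint h2
      exact ⟨P, E, fun _ => ⟨hE, hEd, hP, hw⟩⟩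
    · exact ⟨fun _ => ∅, Set.Iio lam.ord, fun h' => absurd h' h⟩
  choose P E hPE using hdata
  refine ⟨fun δ hδ => hδ.1, ?_, fun γ => ⋃ (pr : ↥(Set.Iio γ ×ˢ Set.Iic γ)),
    P pr.1.1 pr.1.2, ?_, ?_⟩
  · -- nonstationary
    have hW := diagClub hreg hunc E (fun i hi => (hPE i hi).1)
    intro hst
    obtain ⟨δ, hδR, hδW⟩ := hst _ hW
    obtain ⟨⟨hdl, i, hiδ, hδAi⟩, hcof⟩ := hδR
    have hEd := (hPE i (hiδ.trans hdl)).2.1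
    rw [Set.eq_empty_iff_forall_notMem] at hEd
    exact hEd δ ⟨⟨hδAi, hcof⟩, hδW.2 i hiδ⟩
  · intro γ hγ
    constructor
    · intro x hx
      obtain ⟨pr, hxP⟩ := Set.mem_iUnion.1 hx
      have hi : pr.1.1 < lam.ord := lt_trans pr.2.1 hγ
      have hβ : pr.1.2 < lam.ord := lt_of_le_of_lt pr.2.2 hγ
      refine subset_trans (((hPE pr.1.1 hi).2.2.1 pr.1.2 hβ).1 x hxP) ?_
      exact Set.Iio_subset_Iio pr.2.2
    · refine (Cardinal.card_iUnion_lt_iff_forall_of_isRegular (isRegular_lift hreg) ?_).2 ?_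
      · have h1 : #↥(Set.Iio γ ×ˢ Set.Iic γ) = #(↥(Set.Iio γ) × ↥(Set.Iic γ)) :=
          Cardinal.mk_congr (Equiv.Set.prod _ _)
        rw [h1, Cardinal.mk_prod, Cardinal.lift_id, Cardinal.lift_id]
        have h2 : #↥(Set.Iio γ) < Cardinal.lift.{1} lam := by
          rw [Ordinal.mk_Iio_ordinal]
          exact Cardinal.lift_lt.2 (Cardinal.lt_ord.1 hγ)
        have h3 : #↥(Set.Iic γ) < Cardinal.lift.{1} lam := by
          have he : Set.Iic γ = Set.Iio (γ + 1) := by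
            rw [Ordinal.add_one_eq_succ, Order.Iio_succ_of_not_isMax (not_isMax γ)]
          rw [he, Ordinal.mk_Iio_ordinal]
          exact Cardinal.lift_lt.2 (Cardinal.lt_ord.1 (succ_lt_lam hreg hγ))
        exact Cardinal.mul_lt_of_lt (isRegular_lift hreg).1 h2 h3
      · intro pr
        have hi : pr.1.1 < lam.ord := lt_trans pr.2.1 hγ
        have hβ : pr.1.2 < lam.ord := lt_of_le_of_lt pr.2.2 hγ
        exact ((hPE pr.1.1 hi).2.2.1 pr.1.2 hβ).2
  · intro α hα hlim hcof
    obtain ⟨hal, i, hiα, hαAi⟩ := hα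
    obtain ⟨x, hx1, hx2, hx3, hx4⟩ := (hPE i (hiα.trans hal)).2.2.2 α hαAi hlim hcof
    refine ⟨x, hx1, hx2, hx3, fun ζ hζ => ?_⟩
    obtain ⟨γ₀, hγ₀, hmem⟩ := Set.mem_iUnion₂.1 (hx4 ζ hζ)
    refine Set.mem_iUnion₂.2 ⟨max i γ₀ + 1, ?_, ?_⟩
    · have : max i γ₀ < α := max_lt hiα hγ₀
      rw [Ordinal.add_one_eq_succ]
      exact hlim.succ_lt this
    · exact Set.mem_iUnion.2 ⟨⟨(i, γ₀), ⟨lt_of_le_of_lt (le_max_left i γ₀) (lt_add_one _),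
        le_of_lt (lt_of_le_of_lt (le_max_right i γ₀) (lt_add_one _))⟩⟩, hmem⟩

theorem part_nonstat (hreg : lam.IsRegular) (A : Set Ordinal.{0})
    (hsub : A ⊆ Set.Iio lam.ord) (hns : ¬ isStationary A lam.ord) : approachable lam A := by
  classical
  obtain ⟨E, hE, hEd⟩ := exists_club_disjoint hns
  rw [Set.eq_empty_iff_forall_notMem] at hEd
  have hbeta : ∀ α ∈ A, Order.IsSuccLimit α → sSup (E ∩ Set.Iio α) < α := by
    intro α hα hlim
    have hla : α < lam.ord := hsub hα
    have hle : sSup (E ∩ Set.Iio α) ≤ α := csSup_le' fun y hy => hy.2.le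
    rcases lt_or_eq_of_le hle with h | h
    · exact h
    · exact absurd ⟨hα, hE.2.2 α hla ⟨hlim.pos, h.symm⟩⟩ (hEd α)
  have hX : ∀ α : Ordinal.{0}, ∃ x : Set Ordinal.{0},
      (α ∈ A ∧ Order.IsSuccLimit α ∧ α.cof.ord < α) →
      (x ⊆ Set.Iio α ∧ (∀ y ∈ x, sSup (E ∩ Set.Iio α) < y) ∧ sSup x = α ∧ otp x < α) := by
    intro α
    by_cases h : α ∈ A ∧ Order.IsSuccLimit α ∧ α.cof.ord < α
    · obtain ⟨x, h1, h2, h3, h4⟩ := exists_cofinal_small h.2.1 h.2.2 (hbeta α h.1 h.2.1)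
      exact ⟨x, fun _ => ⟨h1, h2, h3, h4⟩⟩
    · exact ⟨∅, fun h' => absurd h' h⟩
  choose X hXs using hX
  set P : Ordinal.{0} → Set (Set Ordinal.{0}) := fun γ =>
    {s | ∃ α ζ : Ordinal.{0}, (α ∈ A ∧ Order.IsSuccLimit α ∧ α.cof.ord < α) ∧ ζ < α ∧
      s = X α ∩ Set.Iio ζ ∧
      γ = max (sSup (E ∩ Set.Iio α) + 1) (sSup s + 1)} with hPdef
  have hγα : ∀ {α ζ : Ordinal.{0}}, α ∈ A → Order.IsSuccLimit α → ζ < α →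
      max (sSup (E ∩ Set.Iio α) + 1) (sSup (X α ∩ Set.Iio ζ) + 1) < α := by
    intro α ζ hαA hlim hζ
    apply max_lt
    · rw [Ordinal.add_one_eq_succ]
      exact hlim.succ_lt (hbeta α hαA hlim)
    · have h1 : sSup (X α ∩ Set.Iio ζ) ≤ ζ := csSup_le' fun y hy => hy.2.le
      rw [Ordinal.add_one_eq_succ]
      exact hlim.succ_lt (lt_of_le_of_lt h1 hζ)
  refine ⟨hsub, nonstat_mono (S := {δ | δ ∈ A ∧ δ.cof.ord = δ}) (T := A)
    (fun δ hδ => hδ.1) hns, P, ?_, ?_⟩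
  · intro γ hγ
    constructor
    · rintro s ⟨α, ζ, hmemT, hζ, rfl, hmax⟩
      intro y hy
      have hbdd : BddAbove (X α ∩ Set.Iio ζ) := ⟨ζ, fun z hz => hz.2.le⟩
      have h1 : y ≤ sSup (X α ∩ Set.Iio ζ) := le_csSup hbdd hy
      have h2 : y < sSup (X α ∩ Set.Iio ζ) + 1 := lt_of_le_of_lt h1 (lt_add_one _)
      exact lt_of_lt_of_le h2 (hmax ▸ le_max_right _ _)
    · by_cases hne : (P γ).Nonempty
      swap
      · rw [Set.not_nonempty_iff_eq_empty] at hne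
        rw [hne]
        simpa using lt_of_lt_of_le Cardinal.aleph0_pos (isRegular_lift hreg).1
      · have hβ'γ : sSup (E ∩ Set.Iio γ) ≤ γ := csSup_le' fun y hy => hy.2.le
        have hb1 : sSup (E ∩ Set.Iio γ) + 1 < lam.ord :=
          succ_lt_lam hreg (lt_of_le_of_lt hβ'γ hγ)
        obtain ⟨e0, he0E, he0ge⟩ := hE.2.1 _ hb1
        have hnemp : (E ∩ Set.Ioi (sSup (E ∩ Set.Iio γ))).Nonempty :=
          ⟨e0, he0E, lt_of_lt_of_le (lt_add_one _) he0ge⟩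
        set estar := sInf (E ∩ Set.Ioi (sSup (E ∩ Set.Iio γ))) with hestar
        have hestarmem : estar ∈ E ∩ Set.Ioi (sSup (E ∩ Set.Iio γ)) := csInf_mem hnemp
        have hsubim : P γ ⊆ (fun pr : Ordinal × Ordinal => X pr.1 ∩ Set.Iio pr.2) ''
            (Set.Iio estar ×ˢ Set.Iio estar) := by
          rintro s ⟨α, ζ, hmemT, hζ, rfl, hmax⟩
          obtain ⟨hαA, hlim, hcof⟩ := hmemT
          have hprops := hXs α ⟨hαA, hlim, hcof⟩
          have hga : γ < α := hmax ▸ hγα hαA hlim hζ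
          have hbag : sSup (E ∩ Set.Iio α) < γ := by
            rw [hmax]
            exact lt_of_lt_of_le (lt_add_one _) (le_max_left _ _)
          have hEeq : E ∩ Set.Iio γ = E ∩ Set.Iio α := by
            apply Set.Subset.antisymm
            · exact Set.inter_subset_inter_right E (Set.Iio_subset_Iio hga.le)
            · rintro e ⟨heE, heα⟩
              have h9 : e ≤ sSup (E ∩ Set.Iio α) :=
                le_csSup ⟨α, fun y (hy : y ∈ E ∩ Set.Iio α) => hy.2.le⟩ ⟨heE, heα⟩
              exact ⟨heE, lt_of_le_of_lt h9 hbag⟩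
          have hαe : α < estar := by
            rcases lt_trichotomy α estar with h | h | h
            · exact h
            · exact absurd ⟨hαA, h ▸ hestarmem.1⟩ (hEd α)
            · exfalso
              have h1 : estar ≤ sSup (E ∩ Set.Iio α) :=
                le_csSup ⟨α, fun y hy => hy.2.le⟩ ⟨hestarmem.1, h⟩
              rw [← hEeq] at h1
              exact absurd hestarmem.2 (not_lt.2 h1)
          refine ⟨(α, min ζ α), ⟨hαe, lt_of_le_of_lt (min_le_right ζ α) hαe⟩, ?_⟩
          have : X α ∩ Set.Iio (min ζ α) = X α ∩ Set.Iio ζ := by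
            ext y
            constructor
            · rintro ⟨hyX, hym⟩
              exact ⟨hyX, lt_of_lt_of_le hym (min_le_left ζ α)⟩
            · rintro ⟨hyX, hyζ⟩
              exact ⟨hyX, Set.mem_Iio.2 (lt_min hyζ (hprops.1 hyX))⟩
          exact this
        refine lt_of_le_of_lt (Cardinal.mk_le_mk_of_subset hsubim) ?_
        refine lt_of_le_of_lt Cardinal.mk_image_le ?_
        have h1 : #↥(Set.Iio estar ×ˢ Set.Iio estar)
            = #(↥(Set.Iio estar) × ↥(Set.Iio estar)) := Cardinal.mk_congr (Equiv.Set.prod _ _)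
        rw [h1, Cardinal.mk_prod, Cardinal.lift_id]
        have h2 : #↥(Set.Iio estar) < Cardinal.lift.{1} lam := by
          rw [Ordinal.mk_Iio_ordinal]
          exact Cardinal.lift_lt.2 (Cardinal.lt_ord.1 (hE.1 hestarmem.1))
        exact Cardinal.mul_lt_of_lt (isRegular_lift hreg).1 h2 h2
  · intro α hαA hlim hcof
    have hprops := hXs α ⟨hαA, hlim, hcof⟩
    refine ⟨X α, hprops.1, hprops.2.2.1, hprops.2.2.2, ?_⟩
    intro ζ hζ
    refine Set.mem_iUnion₂.2 ⟨max (sSup (E ∩ Set.Iio α) + 1) (sSup (X α ∩ Set.Iio ζ) + 1),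
      hγα hαA hlim hζ, α, ζ, ⟨hαA, hlim, hcof⟩, hζ, rfl, rfl⟩

end Parts

/-- `I[λ]` is a normal ideal on `λ` (Claim 1.2(2)): it is closed
under subsets, contains every non-stationary subset of `λ` (hence is closed
under finite unions), and is closed under diagonal unions. -/
theorem stmt1 (lam : Cardinal.{0}) (hreg : lam.IsRegular) (hunc : ℵ₀ < lam) :
    (∀ A B : Set Ordinal.{0}, approachable lam A → B ⊆ A → approachable lam B) ∧
    (∀ A : Set Ordinal.{0}, A ⊆ Set.Iio lam.ord → ¬ isStationary A lam.ord →
      approachable lam A) ∧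
    (∀ A B : Set Ordinal.{0}, approachable lam A → approachable lam B →
      approachable lam (A ∪ B)) ∧
    (∀ A : Ordinal.{0} → Set Ordinal.{0},
      (∀ i, i < lam.ord → approachable lam (A i)) →
      approachable lam {δ | δ < lam.ord ∧ ∃ i < δ, δ ∈ A i}) := by
  exact ⟨fun A B hA hBA => part_sub A B hA hBA,
    fun A h1 h2 => part_nonstat hreg A h1 h2,
    fun A B hA hB => part_union hreg hunc A B hA hB,
    fun A hA => part_diag hreg hunc A hA⟩
end
end

section
/- Let λ be a regular uncountable cardinal and let A ⊆ λ be such that {δ ∈ A : δ = cf(δ)} is not stationary in λ. Then A ∈ I[λ] if and only if there exist a sequence ⟨P_α : α < λ⟩, where each P_α is a family of fewer than λ subsets of α, and a club E of λ such that for every limit ordinal α ∈ A ∩ E with cf(α) < α there is a set x ⊆ α with sup(x) = α and otp(x) < α such that x ∩ ζ ∈ ⋃_{γ<α} P_γ for every ζ < α. (That is, requiring the defining condition of I[λ] only on a club of λ yields the same family of sets.) -/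
open Cardinal Set Ordinal

noncomputable section

lemma otp_le {s : Set Ordinal.{0}} {ν : Ordinal.{0}} (h : Nonempty (↥s ≃o ↥(Set.Iio ν))) :
    otp s ≤ ν := csInf_le' h

lemma exists_x {α β : Ordinal.{0}} (hlim : Order.IsSuccLimit α) (hcof : α.cof.ord < α) (hβ : β < α) :
    ∃ x : Set Ordinal.{0}, x ⊆ Set.Iio α ∧ (∀ ξ ∈ x, β < ξ) ∧ sSup x = α ∧ otp x < α := by
  obtain ⟨f, hf⟩ := exists_fundamental_sequence α
  have hmono : ∀ i j (hi : i < α.cof.ord) (hj : j < α.cof.ord), i ≤ j → f i hi ≤ f j hj := by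
    intro i j hi hj hij
    rcases hij.lt_or_eq with h | h
    · exact (hf.2.1 hi hj h).le
    · subst h; exact le_rfl
  have hblsub := hf.2.2
  have hlt : ∀ i (hi : i < α.cof.ord), f i hi < α := by
    intro i hi
    calc f i hi < blsub α.cof.ord f := lt_blsub f i hi
    _ = α := hblsub
  obtain ⟨i₀, hi₀, hfi₀⟩ : ∃ i hi, β + 1 ≤ f i hi := by
    rw [← lt_blsub_iff, hblsub]
    exact hlim.succ_lt hβ
  have hσpos : (0:Ordinal) < α.cof.ord - i₀ := Ordinal.lt_sub.2 (by simpa using hi₀)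
  have hσle : α.cof.ord - i₀ ≤ α.cof.ord := Ordinal.sub_le.2 (le_add_self)
  set F : ↥(Set.Iio (α.cof.ord - i₀)) → Ordinal.{0} :=
    fun j => f (i₀ + j.1) (Ordinal.lt_sub.1 j.2) with hFdef
  have hFmono : StrictMono F := fun j j' hjj =>
    hf.2.1 _ _ ((add_lt_add_iff_left i₀).2 hjj)
  refine ⟨Set.range F, ?_, ?_, ?_, ?_⟩
  · rintro _ ⟨j, rfl⟩; exact hlt _ _
  · rintro _ ⟨j, rfl⟩
    exact lt_of_lt_of_le (lt_of_lt_of_le (lt_add_one β) hfi₀)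
      (hmono _ _ _ _ (le_self_add))
  · have hbdd : BddAbove (Set.range F) := ⟨α, by rintro _ ⟨j, rfl⟩; exact (hlt _ _).le⟩
    have hne : (Set.range F).Nonempty := ⟨F ⟨0, hσpos⟩, mem_range_self _⟩
    refine le_antisymm (csSup_le hne (by rintro _ ⟨j, rfl⟩; exact (hlt _ _).le)) ?_
    by_contra hcon
    push_neg at hcon
    have hb : sSup (Set.range F) + 1 < α := hlim.succ_lt hcon
    obtain ⟨i, hi, hfi⟩ : ∃ i hi, sSup (Set.range F) + 1 ≤ f i hi := by
      rw [← lt_blsub_iff, hblsub]; exact hb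
    have hjlt : max i i₀ - i₀ < α.cof.ord - i₀ := by
      rw [Ordinal.lt_sub, Ordinal.add_sub_cancel_of_le (le_max_right i i₀)]
      exact max_lt hi hi₀
    have hle : sSup (Set.range F) + 1 ≤ F ⟨max i i₀ - i₀, hjlt⟩ := by
      refine hfi.trans (hmono _ _ _ _ ?_)
      rw [Ordinal.add_sub_cancel_of_le (le_max_right i i₀)]
      exact le_max_left i i₀
    have h2 : F ⟨max i i₀ - i₀, hjlt⟩ ≤ sSup (Set.range F) := le_csSup hbdd (mem_range_self _)
    exact absurd (lt_of_lt_of_le (lt_of_lt_of_le (lt_add_one _) hle) h2) (lt_irrefl _)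
  · have e1 : ↥(Set.Iio (α.cof.ord - i₀)) ≃o ↥(Set.range F) := StrictMono.orderIso F hFmono
    exact lt_of_le_of_lt (otp_le ⟨e1.symm⟩) (lt_of_le_of_lt hσle hcof)

lemma sSup_gap_lt {E : Set Ordinal.{0}} {lam : Cardinal.{0}} (hE : isClub E lam.ord)
    {α : Ordinal.{0}} (h0 : 0 < α) (hα : α < lam.ord) (hαE : α ∉ E) :
    sSup (E ∩ Set.Iio α) < α := by
  have hle : sSup (E ∩ Set.Iio α) ≤ α := by
    rcases (E ∩ Set.Iio α).eq_empty_or_nonempty with he | hne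
    · rw [he, csSup_empty]; exact h0.le
    · exact csSup_le hne fun b hb => hb.2.le
  rcases hle.lt_or_eq with h | h
  · exact h
  · exact absurd (hE.2.2 α hα ⟨h0, h.symm⟩) hαE

lemma mem_le_sSup_gap {E : Set Ordinal.{0}} {α e : Ordinal.{0}} (he : e ∈ E) (h : e < α) :
    e ≤ sSup (E ∩ Set.Iio α) :=
  le_csSup ⟨α, fun _ hb => hb.2.le⟩ ⟨he, h⟩


/-- Observation 1.1A: requiring the defining condition of `I[λ]`
only on a club yields the same family of sets. -/
theorem stmt2 (lam : Cardinal.{0}) (hreg : lam.IsRegular) (hunc : ℵ₀ < lam)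
    (A : Set Ordinal.{0}) (hA : A ⊆ Set.Iio lam.ord)
    (hns : ¬ isStationary {δ | δ ∈ A ∧ δ.cof.ord = δ} lam.ord) :
    approachable lam A ↔
      ∃ P : Ordinal.{0} → Set (Set Ordinal.{0}), ∃ E : Set Ordinal.{0},
        (∀ α < lam.ord, (∀ x ∈ P α, x ⊆ Set.Iio α) ∧
          #(P α) < Cardinal.lift.{1} lam) ∧
        isClub E lam.ord ∧
        ∀ α ∈ A ∩ E, Order.IsSuccLimit α → α.cof.ord < α →
          ∃ x : Set Ordinal, x ⊆ Set.Iio α ∧ sSup x = α ∧ otp x < α ∧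
            ∀ ζ < α, x ∩ Set.Iio ζ ∈ ⋃ γ ∈ Set.Iio α, P γ := by
  constructor
  · rintro ⟨_, _, P, hP, hcond⟩
    refine ⟨P, Set.Iio lam.ord, hP, ?_, ?_⟩
    · exact ⟨fun _ h => h, fun β hβ => ⟨β, hβ, le_rfl⟩, fun β hβ _ => hβ⟩
    · intro α hα hlim hcof; exact hcond α hα.1 hlim hcof
  · rintro ⟨P, E, hP, hE, hcond⟩
    refine ⟨hA, hns, ?_⟩
    have hi0 : ℵ₀ ≤ Cardinal.lift.{1} lam := by
      have := Cardinal.lift_le.{1}.2 hunc.le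
      simpa using this
    have hch : ∀ α : Ordinal.{0}, ∃ x : Set Ordinal.{0},
        (α ∈ A ∧ α ∉ E ∧ Order.IsSuccLimit α ∧ α.cof.ord < α) →
        (x ⊆ Set.Iio α ∧ (∀ ξ ∈ x, sSup (E ∩ Set.Iio α) < ξ) ∧ sSup x = α ∧ otp x < α) := by
      intro α
      by_cases h : α ∈ A ∧ α ∉ E ∧ Order.IsSuccLimit α ∧ α.cof.ord < α
      · obtain ⟨hA', hE', hlim, hcof⟩ := h
        have hβ : sSup (E ∩ Set.Iio α) < α := sSup_gap_lt hE hlim.pos (hA hA') hE'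
        obtain ⟨x, h1, h2, h3, h4⟩ := exists_x hlim hcof hβ
        exact ⟨x, fun _ => ⟨h1, h2, h3, h4⟩⟩
      · exact ⟨∅, fun h' => absurd h' h⟩
    choose xf hxf using hch
    set ext : Ordinal.{0} → Set (Set Ordinal.{0}) := fun γ =>
      {s | ∃ α, (α ∈ A ∧ α ∉ E ∧ Order.IsSuccLimit α ∧ α.cof.ord < α) ∧
        ∃ ζ : Ordinal.{0}, s = xf α ∩ Set.Iio ζ ∧ s.Nonempty ∧ sSup s + 1 = γ} with hext
    refine ⟨fun γ => P γ ∪ insert ∅ (ext γ), ?_, ?_⟩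
    · intro γ hγ
      constructor
      · intro x hx
        rcases hx with hx | hx
        · exact (hP γ hγ).1 x hx
        · rcases mem_insert_iff.1 hx with rfl | hx
          · exact empty_subset _
          · obtain ⟨α, hBα, ζ, rfl, hne, hsup⟩ := hx
            intro ξ hξ
            have hbdd : BddAbove (xf α ∩ Set.Iio ζ) := ⟨ζ, fun _ hb => hb.2.le⟩
            have := le_csSup hbdd hξ
            exact lt_of_le_of_lt this (hsup ▸ lt_add_one _)
      · -- cardinality
        obtain ⟨e, heE, hγe⟩ := hE.2.1 γ hγ
        have hEne : {e : Ordinal.{0} | e ∈ E ∧ γ ≤ e}.Nonempty := ⟨e, heE, hγe⟩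
        set μ := sInf {e : Ordinal.{0} | e ∈ E ∧ γ ≤ e} with hμdef
        have hμ : μ ∈ E ∧ γ ≤ μ := csInf_mem hEne
        have hμlt : μ < lam.ord := hE.1 hμ.1
        have claim : ext γ ⊆ Set.range
            (fun p : ↥(Set.Iic μ) × ↥(Set.Iic μ) => xf p.1 ∩ Set.Iio (p.2 : Ordinal)) := by
          rintro s ⟨α, hBα, ζ, rfl, hne, hsup⟩
          obtain ⟨h1, h2, h3, h4⟩ := hxf α hBα
          obtain ⟨ξ₀, hξ₀⟩ := hne
          have hbdd : BddAbove (xf α ∩ Set.Iio ζ) := ⟨ζ, fun _ hb => hb.2.le⟩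
          have hβγ : sSup (E ∩ Set.Iio α) < γ := by
            calc sSup (E ∩ Set.Iio α) < ξ₀ := h2 ξ₀ hξ₀.1
            _ ≤ sSup (xf α ∩ Set.Iio ζ) := le_csSup hbdd hξ₀
            _ < γ := hsup ▸ lt_add_one _
          have hαμ : α ≤ μ := by
            by_contra hcon
            push_neg at hcon
            have h5 : μ ≤ sSup (E ∩ Set.Iio α) := mem_le_sSup_gap hμ.1 hcon
            exact absurd ((h5.trans_lt hβγ).trans_le hμ.2) (lt_irrefl μ)
          refine ⟨(⟨α, hαμ⟩, ⟨min ζ α, (min_le_right ζ α).trans hαμ⟩), ?_⟩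
          ext b
          simp only [mem_inter_iff, mem_Iio, lt_min_iff]
          constructor
          · rintro ⟨hb, hbζ, _⟩; exact ⟨hb, hbζ⟩
          · rintro ⟨hb, hbζ⟩; exact ⟨hb, hbζ, h1 hb⟩
        have hIic : #(↥(Set.Iic μ)) < Cardinal.lift.{1} lam := by
          have h1 : Set.Iic μ = Set.Iio (μ + 1) := by
            ext b
            simp only [mem_Iic, mem_Iio, Ordinal.add_one_eq_succ, Order.lt_succ_iff]
          rw [h1, Cardinal.mk_Iio_ordinal, Cardinal.lift_lt, ← Cardinal.lt_ord]
          have := (isSuccLimit_ord hreg.aleph0_le).succ_lt hμlt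
          rwa [Ordinal.add_one_eq_succ]
        have hcard_ext : #(ext γ) < Cardinal.lift.{1} lam := by
          calc #(ext γ) ≤ #(↥(Set.Iic μ) × ↥(Set.Iic μ)) :=
                (mk_le_mk_of_subset claim).trans (mk_range_le)
          _ = #(↥(Set.Iic μ)) * #(↥(Set.Iic μ)) := by
                rw [mk_prod]; simp
          _ < Cardinal.lift.{1} lam := mul_lt_of_lt hi0 hIic hIic
        calc #(↥(P γ ∪ insert ∅ (ext γ))) ≤ #(↥(P γ)) + #(↥(insert ∅ (ext γ))) :=
              mk_union_le _ _
        _ ≤ #(↥(P γ)) + (#(↥(ext γ)) + 1) := add_le_add_right mk_insert_le _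
        _ < Cardinal.lift.{1} lam :=
              add_lt_of_lt hi0 (hP γ hγ).2
                (add_lt_of_lt hi0 hcard_ext (one_lt_aleph0.trans_le hi0))
    · intro α hαA hlim hcof
      by_cases hαE : α ∈ E
      · obtain ⟨x, h1, h2, h3, h4⟩ := hcond α ⟨hαA, hαE⟩ hlim hcof
        refine ⟨x, h1, h2, h3, fun ζ hζ => ?_⟩
        have := h4 ζ hζ
        simp only [mem_iUnion] at this ⊢
        obtain ⟨γ, hγ, hm⟩ := this
        exact ⟨γ, hγ, Or.inl hm⟩
      · have hBα : α ∈ A ∧ α ∉ E ∧ Order.IsSuccLimit α ∧ α.cof.ord < α := ⟨hαA, hαE, hlim, hcof⟩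
        obtain ⟨h1, h2, h3, h4⟩ := hxf α hBα
        refine ⟨xf α, h1, h3, h4, fun ζ hζ => ?_⟩
        rcases (xf α ∩ Set.Iio ζ).eq_empty_or_nonempty with he | hne
        · rw [he]
          simp only [mem_iUnion]
          exact ⟨0, hlim.pos, Or.inr (mem_insert _ _)⟩
        · have hsα : sSup (xf α ∩ Set.Iio ζ) + 1 < α := by
            have hs : sSup (xf α ∩ Set.Iio ζ) ≤ ζ := csSup_le hne fun _ hb => hb.2.le
            exact hlim.succ_lt (hs.trans_lt hζ)
          simp only [mem_iUnion]
          exact ⟨sSup (xf α ∩ Set.Iio ζ) + 1, hsα,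
            Or.inr (mem_insert_iff.2 (Or.inr ⟨α, hBα, ζ, rfl, hne, rfl⟩))⟩
end
end

section
/- Let ℵ₀ < κ < λ < μ be regular cardinals. (a) If cov(λ,κ,κ,2) < μ, then (*)_{μ,λ,κ} holds: for every stationary S ⊆ {δ < μ : cf(δ) = κ} and every sequence ⟨a_i : i ∈ S⟩ of subsets of λ, each of cardinality < κ, there is a set b ⊆ λ of cardinality < κ such that {i ∈ S : a_i ∩ i ⊆ b} is stationary in μ. (b) Moreover, (*)_{μ,λ,κ} implies (*)⁻_{μ,λ,κ}: for every such S and ⟨a_i : i ∈ S⟩ there is a set b ⊆ λ of cardinality < κ such that {i ∈ S : a_i ⊆ b} is unbounded in μ. -/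
open Cardinal Set Ordinal

noncomputable section

/-- `[λ]^{<κ}`: the subsets of `λ` of cardinality `< κ`. -/
def boundedSubsets (lam kappa : Cardinal.{0}) : Set (Set Ordinal.{0}) :=
  {a | a ⊆ Set.Iio lam.ord ∧ #a < Cardinal.lift.{1} kappa}

/-- `C` is a club of `[λ]^{<κ}`: cofinal in `([λ]^{<κ}, ⊆)` and closed under
unions of `⊆`-increasing chains of length `< κ` whose union has
cardinality `< κ`. -/
def isClubSets (lam kappa : Cardinal.{0}) (C : Set (Set Ordinal.{0})) : Prop :=
  C ⊆ boundedSubsets lam kappa ∧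
  (∀ a ∈ boundedSubsets lam kappa, ∃ b ∈ C, a ⊆ b) ∧
  (∀ γ : Ordinal, 0 < γ → γ < kappa.ord →
    ∀ f : Ordinal.{0} → Set Ordinal.{0},
      (∀ i < γ, f i ∈ C) →
      (∀ i j : Ordinal, i ≤ j → j < γ → f i ⊆ f j) →
      #(⋃ i ∈ Set.Iio γ, f i) < Cardinal.lift.{1} kappa →
      (⋃ i ∈ Set.Iio γ, f i) ∈ C)

/-- `S` is a stationary subset of `[λ]^{<κ}`. -/
def isStationarySets (lam kappa : Cardinal.{0}) (S : Set (Set Ordinal.{0})) :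
    Prop :=
  S ⊆ boundedSubsets lam kappa ∧
  ∀ C, isClubSets lam kappa C → (S ∩ C).Nonempty

/-- `cov(μ,κ,κ,2)`: the least cardinality of a family of subsets of `μ`, each
of cardinality `< κ`, such that every subset of `μ` of cardinality `< κ` is
included in some member of the family. -/
def covC (mu kappa : Cardinal.{0}) : Cardinal.{0} :=
  sInf {c : Cardinal |
    ∃ P : Set (Set Ordinal.{0}), Cardinal.lift.{1} c = #P ∧
      (∀ x ∈ P, x ⊆ Set.Iio mu.ord ∧ #x < Cardinal.lift.{1} kappa) ∧
      ∀ a : Set Ordinal, a ⊆ Set.Iio mu.ord → #a < Cardinal.lift.{1} kappa →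
        ∃ b ∈ P, a ⊆ b}

/-- The property `(*)_{μ,λ,κ}` of Claim 2.9. -/
def starProp (mu lam kappa : Cardinal.{0}) : Prop :=
  ∀ S : Set Ordinal.{0}, S ⊆ {δ : Ordinal | δ < mu.ord ∧ δ.cof = kappa} →
    isStationary S mu.ord →
    ∀ a : Ordinal.{0} → Set Ordinal.{0},
      (∀ i ∈ S, a i ⊆ Set.Iio lam.ord ∧ #(a i) < Cardinal.lift.{1} kappa) →
      ∃ b : Set Ordinal, b ⊆ Set.Iio lam.ord ∧ #b < Cardinal.lift.{1} kappa ∧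
        isStationary {i | i ∈ S ∧ a i ∩ Set.Iio i ⊆ b} mu.ord

/-- The property `(*)⁻_{μ,λ,κ}` of Claim 2.9. -/
def starMinusProp (mu lam kappa : Cardinal.{0}) : Prop :=
  ∀ S : Set Ordinal.{0}, S ⊆ {δ : Ordinal | δ < mu.ord ∧ δ.cof = kappa} →
    isStationary S mu.ord →
    ∀ a : Ordinal.{0} → Set Ordinal.{0},
      (∀ i ∈ S, a i ⊆ Set.Iio lam.ord ∧ #(a i) < Cardinal.lift.{1} kappa) →
      ∃ b : Set Ordinal, b ⊆ Set.Iio lam.ord ∧ #b < Cardinal.lift.{1} kappa ∧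
        ∀ α < mu.ord, ∃ i, (i ∈ S ∧ a i ⊆ b) ∧ α ≤ i

lemma mySSup_le {s : Set Ordinal.{0}} {β : Ordinal} (h : ∀ x ∈ s, x ≤ β) : sSup s ≤ β :=
  csSup_le' h

lemma isClub_iInter {ι : Type} [Nonempty ι] {mu : Cardinal.{0}}
    (hm : mu.IsRegular) (hml : ℵ₀ < mu) (hι : #ι < mu)
    (D : ι → Set Ordinal.{0}) (hD : ∀ j, isClub (D j) mu.ord) :
    isClub (⋂ j, D j) mu.ord := by
  have hlim : Order.IsSuccLimit mu.ord := Cardinal.isSuccLimit_ord hm.aleph0_le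
  -- successor function
  have hnext : ∀ j : ι, ∀ x < mu.ord, ∃ γ, γ ∈ D j ∧ x < γ ∧ γ < mu.ord := by
    intro j x hx
    obtain ⟨γ, hγ, hxγ⟩ := (hD j).2.1 (x + 1) (by simpa [Order.succ_eq_add_one] using hlim.succ_lt hx)
    exact ⟨γ, hγ, lt_of_lt_of_le (lt_add_one x) hxγ, (hD j).1 hγ⟩
  classical
  set g : ι → Ordinal.{0} → Ordinal.{0} := fun j x =>
    if h : x < mu.ord then Classical.choose (hnext j x h) else 0 with hg
  have hgspec : ∀ j x, x < mu.ord → g j x ∈ D j ∧ x < g j x ∧ g j x < mu.ord := by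
    intro j x h
    simpa [hg, h] using Classical.choose_spec (hnext j x h)
  set nxt : Ordinal.{0} → Ordinal.{0} := fun x => ⨆ j, g j x with hnxt
  have hcof : mu.ord.cof = mu := hm.cof_eq
  have hnxt_lt : ∀ x < mu.ord, nxt x < mu.ord := by
    intro x hx
    refine Ordinal.iSup_lt_ord (by rw [hcof]; exact hι) fun j => (hgspec j x hx).2.2
  have hnxt_gt : ∀ x < mu.ord, x < nxt x := by
    intro x hx
    obtain ⟨j⟩ := ‹Nonempty ι›
    exact lt_of_lt_of_le (hgspec j x hx).2.1 (le_ciSup (Ordinal.bddAbove_range _) j)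
  -- given a start below mu.ord, produce a member of the intersection above it
  have key : ∀ x₀ < mu.ord, ∃ δ, δ ∈ (⋂ j, D j) ∧ x₀ ≤ δ ∧ δ < mu.ord := by
    intro x₀ hx₀
    set b : ℕ → Ordinal.{0} := fun n => nxt^[n] x₀ with hb
    have hblt : ∀ n, b n < mu.ord := by
      intro n; induction n with
      | zero => simpa [hb]
      | succ n ih => simpa [hb, Function.iterate_succ_apply'] using hnxt_lt _ ih
    have hbmono : ∀ n, b n < b (n + 1) := by
      intro n
      simpa [hb, Function.iterate_succ_apply'] using hnxt_gt _ (hblt n)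
    set δ : Ordinal.{0} := ⨆ n, b n with hδ
    have hδlt : δ < mu.ord := by
      refine Ordinal.iSup_lt_ord ?_ hblt
      rw [hcof]; simpa using hml
    have hbleδ : ∀ n, b n ≤ δ := fun n => le_ciSup (Ordinal.bddAbove_range _) n
    have hbltδ : ∀ n, b n < δ := fun n => lt_of_lt_of_le (hbmono n) (hbleδ (n + 1))
    have hδ0 : 0 < δ := lt_of_le_of_lt (zero_le (a := b 0)) (hbltδ 0)
    have hmem : ∀ j, δ ∈ D j := by
      intro j
      have hgb : ∀ n, g j (b n) ∈ D j ∧ b n < g j (b n) ∧ g j (b n) ≤ b (n+1) := by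
        intro n
        obtain ⟨h1, h2, _⟩ := hgspec j (b n) (hblt n)
        refine ⟨h1, h2, ?_⟩
        have : g j (b n) ≤ nxt (b n) := le_ciSup (Ordinal.bddAbove_range _) j
        simpa [hb, Function.iterate_succ_apply'] using this
      have hgmem : ∀ n, g j (b n) ∈ D j ∩ Set.Iio δ := fun n =>
        ⟨(hgb n).1, lt_of_le_of_lt (hgb n).2.2 (hbltδ (n+1))⟩
      have hacc : δ ∈ ordAcc (D j) := by
        refine ⟨hδ0, le_antisymm ?_ (mySSup_le fun x hx => le_of_lt hx.2)⟩
        refine ciSup_le fun n => ?_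
        exact le_trans (le_of_lt (hgb n).2.1)
          (le_csSup (BddAbove.mono inter_subset_right (bddAbove_Iio)) (hgmem n))
      exact (hD j).2.2 δ hδlt hacc
    exact ⟨δ, mem_iInter.mpr hmem, le_trans (le_refl _) ((hbleδ 0).trans_eq' (by simp [hb])), hδlt⟩
  obtain ⟨j₀⟩ := ‹Nonempty ι›
  refine ⟨?_, ?_, ?_⟩
  · exact (iInter_subset _ j₀).trans (hD j₀).1
  · intro β hβ
    obtain ⟨δ, hδ, hle, _⟩ := key β hβ
    exact ⟨δ, hδ, hle⟩
  · intro β hβ hacc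
    refine mem_iInter.mpr fun j => ?_
    have hne : ((⋂ j, D j) ∩ Set.Iio β).Nonempty := by
      by_contra h
      rw [Set.not_nonempty_iff_eq_empty] at h
      obtain ⟨h1, h2⟩ := hacc
      rw [h] at h2
      simp at h2
      exact absurd h2 (ne_of_gt h1)
    refine (hD j).2.2 β hβ ⟨hacc.1, le_antisymm ?_ (mySSup_le fun x hx => le_of_lt hx.2)⟩
    calc β = sSup ((⋂ j, D j) ∩ Set.Iio β) := hacc.2
      _ ≤ sSup (D j ∩ Set.Iio β) := csSup_le_csSup
          (BddAbove.mono inter_subset_right bddAbove_Iio) hne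
          (inter_subset_inter_left _ (iInter_subset _ j))

lemma isClub_Ioo {mu : Cardinal.{0}} (hm : mu.IsRegular) {α : Ordinal.{0}}
    (hα : α < mu.ord) : isClub (Set.Ioo α mu.ord) mu.ord := by
  have hlim : Order.IsSuccLimit mu.ord := Cardinal.isSuccLimit_ord hm.aleph0_le
  refine ⟨fun x hx => hx.2, ?_, ?_⟩
  · intro β hβ
    refine ⟨max β (α + 1), ⟨lt_of_lt_of_le (lt_add_one α) (le_max_right _ _),
      max_lt hβ (by simpa [Order.succ_eq_add_one] using hlim.succ_lt hα)⟩, le_max_left _ _⟩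
  · intro β hβ hacc
    obtain ⟨h1, h2⟩ := hacc
    refine ⟨?_, hβ⟩
    by_contra hle
    push_neg at hle
    have : Set.Ioo α mu.ord ∩ Set.Iio β = ∅ := by
      ext x
      simp only [mem_inter_iff, mem_Ioo, mem_Iio, mem_empty_iff_false, iff_false]
      rintro ⟨⟨hx1, _⟩, hx3⟩
      exact absurd (lt_of_lt_of_le hx3 hle) (not_lt_of_gt hx1)
    rw [this] at h2
    simp at h2
    exact absurd h2 (ne_of_gt h1)

/-- Claim 2.9: `cov(λ,κ,κ,2) < μ ⟹ (*)_{μ,λ,κ} ⟹ (*)⁻_{μ,λ,κ}`. -/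
theorem stmt16 (kappa lam mu : Cardinal.{0})
    (hk : kappa.IsRegular) (hl : lam.IsRegular) (hm : mu.IsRegular)
    (h0 : ℵ₀ < kappa) (h1 : kappa < lam) (h2 : lam < mu) :
    (covC lam kappa < mu → starProp mu lam kappa) ∧
    (starProp mu lam kappa → starMinusProp mu lam kappa) := by
  classical
  have hml : ℵ₀ < mu := h0.trans (h1.trans h2)
  constructor
  · -- part (a)
    intro hcov S hS hSstat a ha
    -- the defining set of covC is nonempty
    have hne : {c : Cardinal.{0} |
      ∃ P : Set (Set Ordinal.{0}), Cardinal.lift.{1} c = #P ∧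
        (∀ x ∈ P, x ⊆ Set.Iio lam.ord ∧ #x < Cardinal.lift.{1} kappa) ∧
        ∀ a : Set Ordinal, a ⊆ Set.Iio lam.ord → #a < Cardinal.lift.{1} kappa →
          ∃ b ∈ P, a ⊆ b}.Nonempty := by
      -- witness: all bounded subsets
      set P₀ : Set (Set Ordinal.{0}) := boundedSubsets lam kappa with hP₀
      have hinj : #P₀ ≤ Cardinal.lift.{1} (2 ^ lam) := by
        have h2l : Cardinal.lift.{1} (2 ^ lam) = 2 ^ Cardinal.lift.{1} lam := by
          rw [Cardinal.lift_power]; norm_num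
        have : #P₀ ≤ #(Set ↥(Set.Iio lam.ord)) := by
          refine mk_le_of_injective
            (f := fun s => {x : ↥(Set.Iio lam.ord) | ↑x ∈ (s : Set Ordinal)}) ?_
          intro s t hst
          ext1
          ext x
          constructor
          · intro hx
            exact (Set.ext_iff.mp hst ⟨x, s.2.1 hx⟩).mp hx
          · intro hx
            exact (Set.ext_iff.mp hst ⟨x, t.2.1 hx⟩).mpr hx
        rw [mk_set, Cardinal.mk_Iio_ordinal, card_ord] at this
        rwa [h2l]
      obtain ⟨c, hc⟩ := Cardinal.mem_range_lift_of_le hinj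
      exact ⟨c, P₀, hc, fun x hx => hx, fun s hs hsk => ⟨s, ⟨hs, hsk⟩, subset_refl s⟩⟩
    obtain ⟨P, hlift, hPprop, hPcov⟩ :
        ∃ P : Set (Set Ordinal.{0}), Cardinal.lift.{1} (covC lam kappa) = #P ∧
          (∀ x ∈ P, x ⊆ Set.Iio lam.ord ∧ #x < Cardinal.lift.{1} kappa) ∧
          ∀ a : Set Ordinal, a ⊆ Set.Iio lam.ord → #a < Cardinal.lift.{1} kappa →
            ∃ b ∈ P, a ⊆ b := csInf_mem hne
    set ι : Type := (covC lam kappa).out with hι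
    have hmkι : #ι = covC lam kappa := Cardinal.mk_out _
    have hPne : Nonempty ↥P := by
      obtain ⟨b0, hb0, -⟩ := hPcov ∅ (by simp)
        (by simp only [Cardinal.mk_emptyCollection]; exact pos_iff_ne_zero.mpr (by simp only [ne_eq, Cardinal.lift_eq_zero]; exact hk.pos.ne'))
      exact ⟨⟨b0, hb0⟩⟩
    haveI hιne : Nonempty ι := by
      rw [← Cardinal.mk_ne_zero_iff, hmkι]
      intro hc0
      rw [hc0] at hlift
      simp at hlift
      exact (Cardinal.mk_ne_zero_iff.mpr hPne) hlift.symm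
    have hEq : Cardinal.lift.{1} #ι = Cardinal.lift.{0} #(↥P) := by
      rw [hmkι, Cardinal.lift_id']
      exact hlift
    obtain ⟨e⟩ := Cardinal.lift_mk_eq'.mp hEq
    set T : ι → Set Ordinal.{0} := fun j => {i | i ∈ S ∧ a i ∩ Set.Iio i ⊆ (e j : Set Ordinal)}
      with hT
    by_contra hcon
    push_neg at hcon
    have hns : ∀ j : ι, ∃ C, isClub C mu.ord ∧ T j ∩ C = ∅ := by
      intro j
      have hbP := hPprop (e j) (e j).2
      have hnst := hcon (e j) hbP.1 hbP.2
      rw [isStationary] at hnst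
      push_neg at hnst
      obtain ⟨C, hC, hCe⟩ := hnst
      exact ⟨C, hC, hCe⟩
    choose D hD hDe using hns
    have hιlt : #ι < mu := by rw [hmkι]; exact hcov
    have hclub := isClub_iInter hm hml hιlt D hD
    obtain ⟨i, hiS, hiD⟩ := hSstat _ hclub
    -- cover a i ∩ Iio i
    have hai : a i ∩ Set.Iio i ⊆ Set.Iio lam.ord := fun x hx => (ha i hiS).1 hx.1
    have haik : #(↥(a i ∩ Set.Iio i)) < Cardinal.lift.{1} kappa :=
      lt_of_le_of_lt (Cardinal.mk_le_mk_of_subset inter_subset_left) (ha i hiS).2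
    obtain ⟨b, hbP, hbcov⟩ := hPcov _ hai haik
    set j : ι := e.symm ⟨b, hbP⟩ with hj
    have hiT : i ∈ T j := by
      refine ⟨hiS, ?_⟩
      rw [hj]
      simpa using hbcov
    have : i ∈ T j ∩ D j := ⟨hiT, mem_iInter.mp hiD j⟩
    rw [hDe j] at this
    exact this
  · -- part (b)
    intro hstar S hS hSstat a ha
    have hlm : lam.ord < mu.ord := Cardinal.ord_lt_ord.mpr h2
    set S' := S ∩ {i | lam.ord < i} with hS'
    have hS'sub : S' ⊆ {δ : Ordinal | δ < mu.ord ∧ δ.cof = kappa} :=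
      fun i hi => hS hi.1
    have hS'stat : isStationary S' mu.ord := by
      intro C hC
      have hC' : isClub (C ∩ Set.Ioo lam.ord mu.ord) mu.ord := by
        have := isClub_iInter (ι := Bool) hm hml (by simp; exact (nat_lt_aleph0 2).trans hml)
          (fun b => if b then C else Set.Ioo lam.ord mu.ord)
          (by intro b; cases b <;> simp [hC, isClub_Ioo hm hlm])
        convert this using 1
        ext x
        simp [Bool.forall_bool, and_comm]
      obtain ⟨i, hiS, hiC⟩ := hSstat _ hC'
      exact ⟨i, ⟨hiS, hiC.2.1⟩, hiC.1⟩
    obtain ⟨b, hb1, hb2, hb3⟩ := hstar S' hS'sub hS'stat a (fun i hi => ha i hi.1)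
    refine ⟨b, hb1, hb2, ?_⟩
    intro α hα
    obtain ⟨i, hiT, hiC⟩ := hb3 _ (isClub_Ioo hm hα)
    refine ⟨i, ⟨hiT.1.1, ?_⟩, le_of_lt hiC.1⟩
    have hsub : a i ⊆ Set.Iio i := fun x hx =>
      Set.mem_Iio.mpr (lt_of_lt_of_le ((ha i hiT.1.1).1 hx) (le_of_lt hiT.1.2))
    intro x hx
    exact hiT.2 ⟨hx, hsub hx⟩
end
end
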